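/- arXiv:2107.03426 — 2 statements merged into one kernel-verified Lean document; each statement's English description precedes it below -/
import Mathlib

section
/- Let J ⊆ ℝ be an interval and let f : J → ℝ be three times continuously differentiable with f'(y) ≥ 0 for all y ∈ J and f'''(y) ≥ b for all y ∈ J, where b > 0. Then for all y₁, y₂ ∈ J, |f(y₁) − f(y₂)| ≥ (b/48)·|y₁ − y₂|³. -/
/-!
Since `f''' ≥ b`, the function `f` minus its Taylor polynomial
`f' m (t - m) + f'' m (t - m)² / 2 + b (t - m)³ / 6` at a point `m` is nondecreasing: the
difference of second derivatives is nondecreasing and vanishes at `m`, so the difference of first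
derivatives has a minimum `0` at `m`. Taking `m` the midpoint of `y₂ ≤ y₁`, the quadratic term
cancels and `f y₁ - f y₂ ≥ f' m (y₁ - y₂) + b (y₁ - y₂)³ / 24 ≥ b (y₁ - y₂)³ / 24`.
-/

open Set

theorem Set.OrdConnected.monotoneOn_of_hasDerivWithinAt_nonneg {S : Set ℝ}
    (hS : S.OrdConnected) {g g' : ℝ → ℝ} (hg : ∀ x ∈ S, HasDerivWithinAt g (g' x) S x)
    (hg' : ∀ x ∈ S, 0 ≤ g' x) :
    MonotoneOn g S :=
  _root_.monotoneOn_of_hasDerivWithinAt_nonneg hS.convex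
    (fun x hx ↦ (hg x hx).continuousWithinAt)
    (fun x hx ↦ (hg x (interior_subset hx)).mono interior_subset)
    (fun x hx ↦ hg' x (interior_subset hx))

theorem Set.OrdConnected.isMinOn_of_hasDerivWithinAt_of_monotoneOn {S : Set ℝ}
    (hS : S.OrdConnected) {u u' : ℝ → ℝ} (hu : ∀ x ∈ S, HasDerivWithinAt u (u' x) S x)
    (hu' : MonotoneOn u' S) {m : ℝ} (hm : m ∈ S) (hm' : u' m = 0) : IsMinOn u S m := by
  intro t ht
  rcases le_total m t with hmt | htm
  · have hmono : MonotoneOn u (S ∩ Ici m) :=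
      (hS.inter ordConnected_Ici).monotoneOn_of_hasDerivWithinAt_nonneg
        (fun x hx ↦ (hu x hx.1).mono inter_subset_left)
        (fun x hx ↦ hm' ▸ hu' hm hx.1 hx.2)
    exact hmono ⟨hm, self_mem_Ici⟩ ⟨ht, hmt⟩ hmt
  · have hanti : MonotoneOn (-u) (S ∩ Iic m) :=
      (hS.inter ordConnected_Iic).monotoneOn_of_hasDerivWithinAt_nonneg
        (fun x hx ↦ ((hu x hx.1).mono inter_subset_left).neg)
        (fun x hx ↦ neg_nonneg.2 (hm' ▸ hu' hx.1 hm hx.2))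
    exact neg_le_neg_iff.1 (hanti ⟨ht, htm⟩ ⟨hm, self_mem_Iic⟩ htm)

theorem Set.OrdConnected.monotoneOn_sub_taylor_of_le_third_deriv {S : Set ℝ}
    (hS : S.OrdConnected) {f f' f'' f''' : ℝ → ℝ}
    (hf : ∀ y ∈ S, HasDerivWithinAt f (f' y) S y)
    (hf' : ∀ y ∈ S, HasDerivWithinAt f' (f'' y) S y)
    (hf'' : ∀ y ∈ S, HasDerivWithinAt f'' (f''' y) S y)
    {b : ℝ} (hb : ∀ y ∈ S, b ≤ f''' y) {m : ℝ} (hm : m ∈ S) :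
    MonotoneOn (fun t ↦ f t - (f' m * (t - m) + f'' m * (t - m) ^ 2 / 2 + b * (t - m) ^ 3 / 6))
      S := by
  have hd : ∀ t, HasDerivAt (fun t ↦ t - m) 1 t := fun t ↦ (hasDerivAt_id' t).sub_const m
  have hP'' : ∀ t, HasDerivAt (fun t ↦ f'' m + b * (t - m)) b t := fun t ↦ by
    simpa using ((hd t).const_mul b).const_add (f'' m)
  have hP' : ∀ t, HasDerivAt (fun t ↦ f' m + f'' m * (t - m) + b * (t - m) ^ 2 / 2)
      (f'' m + b * (t - m)) t := fun t ↦
    ((((hd t).const_mul (f'' m)).const_add (f' m)).fun_add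
      (((hd t).fun_pow 2).const_mul b |>.div_const 2)).congr_deriv (by norm_num; ring)
  have hP : ∀ t,
      HasDerivAt (fun t ↦ f' m * (t - m) + f'' m * (t - m) ^ 2 / 2 + b * (t - m) ^ 3 / 6)
        (f' m + f'' m * (t - m) + b * (t - m) ^ 2 / 2) t := fun t ↦
    ((((hd t).const_mul (f' m)).fun_add
      (((hd t).fun_pow 2).const_mul (f'' m) |>.div_const 2)).fun_add
        (((hd t).fun_pow 3).const_mul b |>.div_const 6)).congr_deriv (by norm_num; ring)
  have he₂ : MonotoneOn (fun t ↦ f'' t - (f'' m + b * (t - m))) S :=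
    hS.monotoneOn_of_hasDerivWithinAt_nonneg
      (fun t ht ↦ (hf'' t ht).fun_sub (hP'' t).hasDerivWithinAt)
      (fun t ht ↦ sub_nonneg.2 (hb t ht))
  have he₁ : ∀ t ∈ S, 0 ≤ f' t - (f' m + f'' m * (t - m) + b * (t - m) ^ 2 / 2) :=
    fun t ht ↦ by
      simpa using hS.isMinOn_of_hasDerivWithinAt_of_monotoneOn
        (fun t ht ↦ (hf' t ht).fun_sub (hP' t).hasDerivWithinAt) he₂ hm (by simp) ht
  exact hS.monotoneOn_of_hasDerivWithinAt_nonneg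
    (fun t ht ↦ (hf t ht).fun_sub (hP t).hasDerivWithinAt) he₁

theorem Set.OrdConnected.mul_sub_pow_three_le_sub {S : Set ℝ} (hS : S.OrdConnected)
    {f f' f'' f''' : ℝ → ℝ}
    (hf : ∀ y ∈ S, HasDerivWithinAt f (f' y) S y)
    (hf' : ∀ y ∈ S, HasDerivWithinAt f' (f'' y) S y)
    (hf'' : ∀ y ∈ S, HasDerivWithinAt f'' (f''' y) S y)
    (hmono : ∀ y ∈ S, 0 ≤ f' y) {b : ℝ} (hb : ∀ y ∈ S, b ≤ f''' y)
    {x y : ℝ} (hx : x ∈ S) (hy : y ∈ S) (hxy : x ≤ y) :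
    b / 24 * (y - x) ^ 3 ≤ f y - f x := by
  have hm : (x + y) / 2 ∈ S := hS.out hx hy ⟨by linarith, by linarith⟩
  have h := hS.monotoneOn_sub_taylor_of_le_third_deriv hf hf' hf'' hb hm hx hy hxy
  nlinarith [mul_nonneg (hmono _ hm) (sub_nonneg.2 hxy)]

theorem stmt_0_general
    (J : Set ℝ) (hJ : J.OrdConnected)
    (f f' f'' f''' : ℝ → ℝ)
    (hf : ∀ y ∈ J, HasDerivWithinAt f (f' y) J y)
    (hf' : ∀ y ∈ J, HasDerivWithinAt f' (f'' y) J y)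
    (hf'' : ∀ y ∈ J, HasDerivWithinAt f'' (f''' y) J y)
    (b : ℝ) (hb : 0 < b)
    (hmono : ∀ y ∈ J, 0 ≤ f' y)
    (hlow : ∀ y ∈ J, b ≤ f''' y) :
    ∀ y₁ ∈ J, ∀ y₂ ∈ J, b / 48 * |y₁ - y₂| ^ 3 ≤ |f y₁ - f y₂| := by
  intro y₁ hy₁ y₂ hy₂
  wlog h : y₂ ≤ y₁ generalizing y₁ y₂
  · rw [abs_sub_comm, abs_sub_comm (f y₁)]
    exact this y₂ hy₂ y₁ hy₁ (le_of_not_ge h)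
  rw [abs_of_nonneg (sub_nonneg.2 h)]
  calc b / 48 * (y₁ - y₂) ^ 3 ≤ b / 24 * (y₁ - y₂) ^ 3 := by
        have := pow_nonneg (sub_nonneg.2 h) 3
        gcongr; norm_num
    _ ≤ f y₁ - f y₂ := hJ.mul_sub_pow_three_le_sub hf hf' hf'' hmono hlow hy₂ hy₁ h
    _ ≤ |f y₁ - f y₂| := le_abs_self _

/-- If `f` is C³ on an interval `J ⊆ ℝ` with `f' ≥ 0` and `f''' ≥ b > 0`
on `J`, then `|f y₁ − f y₂| ≥ (b/48)|y₁ − y₂|³` for all `y₁, y₂ ∈ J`. -/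
theorem stmt_0
    (J : Set ℝ) (hJ : J.OrdConnected)
    (f f' f'' f''' : ℝ → ℝ)
    (hf : ∀ y ∈ J, HasDerivWithinAt f (f' y) J y)
    (hf' : ∀ y ∈ J, HasDerivWithinAt f' (f'' y) J y)
    (hf'' : ∀ y ∈ J, HasDerivWithinAt f'' (f''' y) J y)
    (hf''' : ContinuousOn f''' J)
    (b : ℝ) (hb : 0 < b)
    (hmono : ∀ y ∈ J, 0 ≤ f' y)
    (hlow : ∀ y ∈ J, b ≤ f''' y) :
    ∀ y₁ ∈ J, ∀ y₂ ∈ J, b / 48 * |y₁ - y₂| ^ 3 ≤ |f y₁ - f y₂| :=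
  stmt_0_general J hJ f f' f'' f''' hf hf' hf'' b hb hmono hlow
end

section
/- Let J ⊆ ℝ be an interval and let f : J → ℝ be three times continuously differentiable with f' ≥ 0 and f''' ≥ b > 0 on J. Then for all y₁, y₂ ∈ J, |y₁ − y₂| ≤ (48/b)^(1/3) · |f(y₁) − f(y₂)|^(1/3). In particular, f is injective and its inverse (on f(J)) is Hölder continuous with exponent 1/3 and constant (48/b)^(1/3). -/
/-!
Expand around the midpoint `m` of `[u, v]`. Integrating `f''' ≥ b` twice from `m` gives
`f' t ≥ f' m + f'' m (t - m) + b (t - m)² / 2`; integrating once more over `[u, v]`, the linear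
term cancels by symmetry, so `f v - f u ≥ f' m (v - u) + b (v - u)³ / 24 ≥ b (v - u)³ / 24`.
Cube roots give the Hölder bound, which forces injectivity and transfers to `invFunOn f J`.
Each integration is a comparison `φ' ≤ g' ⇒ g - φ monotone`, so no integrability is needed.
-/

open Set

section Comparison

variable {D : Set ℝ} {g φ g' φ' : ℝ → ℝ}

theorem sub_le_sub_of_hasDerivWithinAt_le (hD : Convex ℝ D)
    (hg : ∀ x ∈ D, HasDerivWithinAt g (g' x) D x) (hφ : ∀ x ∈ D, HasDerivWithinAt φ (φ' x) D x)
    (hle : ∀ x ∈ D, φ' x ≤ g' x) {x y : ℝ} (hx : x ∈ D) (hy : y ∈ D) (hxy : x ≤ y) :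
    φ y - φ x ≤ g y - g x := by
  have hmono : MonotoneOn (g - φ) D :=
    monotoneOn_of_hasDerivWithinAt_nonneg hD
      (fun z hz => ((hg z hz).sub (hφ z hz)).continuousWithinAt)
      (fun z hz => ((hg z (interior_subset hz)).sub (hφ z (interior_subset hz))).mono
        interior_subset)
      (fun z hz => sub_nonneg.2 (hle z (interior_subset hz)))
  have := hmono hx hy hxy
  simp only [Pi.sub_apply] at this
  linarith

theorem sub_le_sub_of_hasDerivWithinAt_of_sign_change (hD : Convex ℝ D) {m : ℝ} (hm : m ∈ D)
    (hg : ∀ x ∈ D, HasDerivWithinAt g (g' x) D x) (hφ : ∀ x ∈ D, HasDerivWithinAt φ (φ' x) D x)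
    (hleft : ∀ x ∈ D, x ≤ m → g' x ≤ φ' x) (hright : ∀ x ∈ D, m ≤ x → φ' x ≤ g' x)
    {t : ℝ} (ht : t ∈ D) : φ t - φ m ≤ g t - g m := by
  rcases le_total m t with hmt | htm
  · exact sub_le_sub_of_hasDerivWithinAt_le (hD.inter (convex_Ici m))
      (fun x hx => (hg x hx.1).mono inter_subset_left)
      (fun x hx => (hφ x hx.1).mono inter_subset_left)
      (fun x hx => hright x hx.1 hx.2) ⟨hm, self_mem_Ici⟩ ⟨ht, hmt⟩ hmt
  · have := sub_le_sub_of_hasDerivWithinAt_le (hD.inter (convex_Iic m))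
      (fun x hx => (hφ x hx.1).mono inter_subset_left)
      (fun x hx => (hg x hx.1).mono inter_subset_left)
      (fun x hx => hleft x hx.1 hx.2) ⟨ht, htm⟩ ⟨hm, self_mem_Iic⟩ htm
    linarith

end Comparison

section ThirdDerivative

variable {J : Set ℝ} {f f' f'' f''' : ℝ → ℝ} {b : ℝ}

theorem add_mul_add_mul_sq_le_of_le_third_deriv (hJ : J.OrdConnected)
    (hf' : ∀ y ∈ J, HasDerivWithinAt f' (f'' y) J y)
    (hf'' : ∀ y ∈ J, HasDerivWithinAt f'' (f''' y) J y)
    (hlow : ∀ y ∈ J, b ≤ f''' y) {m t : ℝ} (hm : m ∈ J) (ht : t ∈ J) :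
    f' m + f'' m * (t - m) + b * (t - m) ^ 2 / 2 ≤ f' t := by
  have hlin : ∀ y ∈ J, HasDerivWithinAt (fun s => b * s) b J y := fun y _ =>
    ((hasDerivAt_id' y).const_mul b).hasDerivWithinAt.congr_deriv (mul_one b)
  have hsecond : ∀ x ∈ J, ∀ y ∈ J, x ≤ y → b * y - b * x ≤ f'' y - f'' x :=
    fun x hx y hy => sub_le_sub_of_hasDerivWithinAt_le hJ.convex hf'' hlin hlow hx hy
  have hquad : ∀ y ∈ J, HasDerivWithinAt (fun s => f'' m * (s - m) + b * (s - m) ^ 2 / 2)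
      (f'' m + b * (y - m)) J y := by
    intro y _
    have hid := (hasDerivAt_id' y).sub_const m
    exact (((hid.const_mul (f'' m)).add ((hid.pow 2).const_mul b |>.div_const 2)).congr_deriv
      (by simp only [Nat.cast_ofNat]; ring)).hasDerivWithinAt
  have := sub_le_sub_of_hasDerivWithinAt_of_sign_change hJ.convex hm hf' hquad
    (fun x hx hxm => by linarith [hsecond x hx m hm hxm])
    (fun x hx hmx => by linarith [hsecond m hm x hx hmx]) ht
  simp only [sub_self] at this
  linarith

theorem mul_add_pow_three_le_sub_of_le_third_deriv (hJ : J.OrdConnected)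
    (hf : ∀ y ∈ J, HasDerivWithinAt f (f' y) J y)
    (hf' : ∀ y ∈ J, HasDerivWithinAt f' (f'' y) J y)
    (hf'' : ∀ y ∈ J, HasDerivWithinAt f'' (f''' y) J y)
    (hlow : ∀ y ∈ J, b ≤ f''' y) {u v : ℝ} (hu : u ∈ J) (hv : v ∈ J) (huv : u ≤ v) :
    f' ((u + v) / 2) * (v - u) + b * (v - u) ^ 3 / 24 ≤ f v - f u := by
  have hm : (u + v) / 2 ∈ J := hJ.out hu hv ⟨by linarith, by linarith⟩
  set m := (u + v) / 2
  have hcubic : ∀ y ∈ J, HasDerivWithinAt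
      (fun s => f' m * (s - m) + f'' m * (s - m) ^ 2 / 2 + b * (s - m) ^ 3 / 6)
      (f' m + f'' m * (y - m) + b * (y - m) ^ 2 / 2) J y := by
    intro y _
    have hid := (hasDerivAt_id' y).sub_const m
    exact ((((hid.const_mul (f' m)).add ((hid.pow 2).const_mul (f'' m) |>.div_const 2)).add
      ((hid.pow 3).const_mul b |>.div_const 6)).congr_deriv
      (by simp only [Nat.cast_ofNat]; ring)).hasDerivWithinAt
  have := sub_le_sub_of_hasDerivWithinAt_le hJ.convex hf hcubic
    (fun y hy => add_mul_add_mul_sq_le_of_le_third_deriv hJ hf' hf'' hlow hm hy) hu hv huv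
  have hv' : v - m = (v - u) / 2 := by ring
  have hu' : u - m = -((v - u) / 2) := by ring
  simp only [hv', hu'] at this
  linarith

theorem pow_three_abs_sub_le_of_le_third_deriv (hJ : J.OrdConnected)
    (hf : ∀ y ∈ J, HasDerivWithinAt f (f' y) J y)
    (hf' : ∀ y ∈ J, HasDerivWithinAt f' (f'' y) J y)
    (hf'' : ∀ y ∈ J, HasDerivWithinAt f'' (f''' y) J y)
    (hb : 0 < b) (hmono : ∀ y ∈ J, 0 ≤ f' y) (hlow : ∀ y ∈ J, b ≤ f''' y)
    {y₁ y₂ : ℝ} (h₁ : y₁ ∈ J) (h₂ : y₂ ∈ J) :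
    |y₁ - y₂| ^ 3 ≤ 24 / b * |f y₁ - f y₂| := by
  wlog h : y₂ ≤ y₁ generalizing y₁ y₂
  · rw [abs_sub_comm, abs_sub_comm (f y₁)]
    exact this h₂ h₁ (le_of_not_ge h)
  have key := mul_add_pow_three_le_sub_of_le_third_deriv hJ hf hf' hf'' hlow h₂ h₁ h
  have hd : 0 ≤ y₁ - y₂ := sub_nonneg.2 h
  have hmid : (y₂ + y₁) / 2 ∈ J := hJ.out h₂ h₁ ⟨by linarith, by linarith⟩
  have hslope := mul_nonneg (hmono _ hmid) hd
  rw [abs_of_nonneg hd, abs_of_nonneg (by nlinarith [pow_nonneg hd 3]), div_mul_eq_mul_div,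
    le_div_iff₀ hb]
  nlinarith

end ThirdDerivative

theorem abs_le_rpow_mul_rpow_of_pow_three_le {x y C : ℝ} (hC : 0 ≤ C) (h : |x| ^ 3 ≤ C * |y|) :
    |x| ≤ C ^ ((1 : ℝ) / 3) * |y| ^ ((1 : ℝ) / 3) := by
  rw [← Real.mul_rpow hC (abs_nonneg y), one_div,
    Real.le_rpow_inv_iff_of_pos (abs_nonneg x) (by positivity) (by norm_num)]
  exact_mod_cast h

section Inverse

variable {J : Set ℝ} {f ω : ℝ → ℝ}

theorem injOn_of_abs_sub_le (h : ∀ x ∈ J, ∀ y ∈ J, |x - y| ≤ ω |f x - f y|) (hω : ω 0 = 0) :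
    InjOn f J := fun x hx y hy hxy => by
  simpa [hxy, hω, sub_eq_zero] using h x hx y hy

theorem abs_invFunOn_sub_le (h : ∀ x ∈ J, ∀ y ∈ J, |x - y| ≤ ω |f x - f y|) {p q : ℝ}
    (hp : p ∈ f '' J) (hq : q ∈ f '' J) :
    |Function.invFunOn f J p - Function.invFunOn f J q| ≤ ω |p - q| := by
  have := h _ (Function.invFunOn_mem hp) _ (Function.invFunOn_mem hq)
  rwa [Function.invFunOn_eq hp, Function.invFunOn_eq hq] at this

end Inverse

theorem stmt_1_general
    (J : Set ℝ) (hJ : J.OrdConnected)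
    (f f' f'' f''' : ℝ → ℝ)
    (hf : ∀ y ∈ J, HasDerivWithinAt f (f' y) J y)
    (hf' : ∀ y ∈ J, HasDerivWithinAt f' (f'' y) J y)
    (hf'' : ∀ y ∈ J, HasDerivWithinAt f'' (f''' y) J y)
    (b : ℝ) (hb : 0 < b)
    (hmono : ∀ y ∈ J, 0 ≤ f' y)
    (hlow : ∀ y ∈ J, b ≤ f''' y) :
    (∀ y₁ ∈ J, ∀ y₂ ∈ J,
        |y₁ - y₂| ≤ (48 / b) ^ ((1 : ℝ) / 3) * |f y₁ - f y₂| ^ ((1 : ℝ) / 3)) ∧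
    Set.InjOn f J ∧
    (∀ p ∈ f '' J, ∀ q ∈ f '' J,
        |Function.invFunOn f J p - Function.invFunOn f J q|
          ≤ (48 / b) ^ ((1 : ℝ) / 3) * |p - q| ^ ((1 : ℝ) / 3)) := by
  let ω : ℝ → ℝ := fun d => (48 / b) ^ ((1 : ℝ) / 3) * d ^ ((1 : ℝ) / 3)
  have holder : ∀ y₁ ∈ J, ∀ y₂ ∈ J, |y₁ - y₂| ≤ ω |f y₁ - f y₂| :=
    fun y₁ h₁ y₂ h₂ => abs_le_rpow_mul_rpow_of_pow_three_le (by positivity) <|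
      (pow_three_abs_sub_le_of_le_third_deriv hJ hf hf' hf'' hb hmono hlow h₁ h₂).trans
        (by gcongr; norm_num)
  exact ⟨holder, injOn_of_abs_sub_le holder (by simp [ω]),
    fun p hp q hq => abs_invFunOn_sub_le holder hp hq⟩

/-- If `f` is C³ on an interval `J ⊆ ℝ` with `f' ≥ 0` and `f''' ≥ b > 0`
on `J`, then `|y₁ − y₂| ≤ (48/b)^(1/3) |f y₁ − f y₂|^(1/3)` for all `y₁, y₂ ∈ J`;
in particular `f` is injective on `J` and its inverse on `f(J)` is `1/3`-Hölder with
constant `(48/b)^(1/3)`. -/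
theorem stmt_1
    (J : Set ℝ) (hJ : J.OrdConnected)
    (f f' f'' f''' : ℝ → ℝ)
    (hf : ∀ y ∈ J, HasDerivWithinAt f (f' y) J y)
    (hf' : ∀ y ∈ J, HasDerivWithinAt f' (f'' y) J y)
    (hf'' : ∀ y ∈ J, HasDerivWithinAt f'' (f''' y) J y)
    (hf''' : ContinuousOn f''' J)
    (b : ℝ) (hb : 0 < b)
    (hmono : ∀ y ∈ J, 0 ≤ f' y)
    (hlow : ∀ y ∈ J, b ≤ f''' y) :
    (∀ y₁ ∈ J, ∀ y₂ ∈ J,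
        |y₁ - y₂| ≤ (48 / b) ^ ((1 : ℝ) / 3) * |f y₁ - f y₂| ^ ((1 : ℝ) / 3)) ∧
    Set.InjOn f J ∧
    (∀ p ∈ f '' J, ∀ q ∈ f '' J,
        |Function.invFunOn f J p - Function.invFunOn f J q|
          ≤ (48 / b) ^ ((1 : ℝ) / 3) * |p - q| ^ ((1 : ℝ) / 3)) :=
  stmt_1_general J hJ f f' f'' f''' hf hf' hf'' b hb hmono hlow
end
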